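/- arXiv:1105.5255 — 2 statements merged into one kernel-verified Lean document; each statement's English description precedes it below -/
import Mathlib

section
/- If Z and S are finite nonempty sets of players with nonnegative values, |Z| ≤ |S|, avg(Z) ≥ avg(S \ Z), and Z ∩ S is nonempty with avg(Z) > 0, then avg(S) ≤ 2 · avg(Z). -/
theorem stmt_0 {α : Type*} [DecidableEq α] (v : α → ℝ) (hv : ∀ i, 0 ≤ v i)
    (Z S : Finset α) (hZ : Z.Nonempty) (hS : S.Nonempty)
    (hcard : Z.card ≤ S.card)
    (havg : (∑ i ∈ Z, v i) / Z.card ≥ (∑ i ∈ S \ Z, v i) / (S \ Z).card)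
    (hint : (Z ∩ S).Nonempty)
    (hpos : 0 < (∑ i ∈ Z, v i) / Z.card) :
    (∑ i ∈ S, v i) / S.card ≤ 2 * ((∑ i ∈ Z, v i) / Z.card) := by
  set a := (∑ i ∈ Z, v i) / Z.card with ha
  have hZc : (0:ℝ) < Z.card := by exact_mod_cast hZ.card_pos
  have hSc : (0:ℝ) < S.card := by exact_mod_cast hS.card_pos
  have hsZ : ∑ i ∈ Z, v i = Z.card * a := by
    rw [ha]; field_simp
  have h1 : ∑ i ∈ S ∩ Z, v i ≤ (Z.card : ℝ) * a := by
    rw [← hsZ]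
    exact Finset.sum_le_sum_of_subset_of_nonneg Finset.inter_subset_right
      (fun i _ _ => hv i)
  have h2 : ∑ i ∈ S \ Z, v i ≤ ((S \ Z).card : ℝ) * a := by
    rcases (S \ Z).eq_empty_or_nonempty with h | h
    · simp [h]
    · have hc : (0:ℝ) < (S \ Z).card := by exact_mod_cast h.card_pos
      have := (div_le_iff₀ hc).mp havg
      linarith
  have hsum : ∑ i ∈ S, v i = ∑ i ∈ S ∩ Z, v i + ∑ i ∈ S \ Z, v i :=
    (Finset.sum_inter_add_sum_sdiff S Z v).symm
  have hcard2 : ((S \ Z).card : ℝ) ≤ S.card := by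
    exact_mod_cast Finset.card_le_card (Finset.sdiff_subset)
  have hZS : (Z.card : ℝ) ≤ S.card := by exact_mod_cast hcard
  rw [div_le_iff₀ hSc]
  have : (0:ℝ) < a := hpos
  nlinarith
end

section
/- Let v : Fin n → ℝ≥0 be nonincreasing, T > 0, and k the minimal integer with ∑_{i<k} v(i) ≥ T. Among all subsets A of size k with sum(A) ≥ T, the set {0,…,k−1} achieves the maximal average, and the maximal average over all eligible sets (sum ≥ T) of any size is attained by a set of size exactly k. -/
namespace Stmt12Aux

variable {n : ℕ}

noncomputable def pre (n m : ℕ) : Finset (Fin n) :=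
  Finset.univ.filter (fun i : Fin n => (i : ℕ) < m)

lemma card_pre {m : ℕ} (h : m ≤ n) : (pre n m).card = m := by
  have : pre n m = (Finset.range m).attachFin
      (fun x hx => lt_of_lt_of_le (Finset.mem_range.mp hx) h) := by
    ext i; simp [pre]
  rw [this, Finset.card_attachFin, Finset.card_range]

lemma sum_le_pre (v : Fin n → ℝ) (hmono : Antitone v) (A : Finset (Fin n)) :
    ∑ i ∈ A, v i ≤ ∑ i ∈ pre n A.card, v i := by
  set m := A.card with hm
  have hmn : m ≤ n := by simpa [hm] using Finset.card_le_card (Finset.subset_univ A)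
  set P := pre n m with hP
  have hPcard : P.card = m := card_pre hmn
  have hsplitA : ∑ i ∈ A, v i = ∑ i ∈ A ∩ P, v i + ∑ i ∈ A \ P, v i := by
    rw [Finset.sum_inter_add_sum_sdiff]
  have hsplitP : ∑ i ∈ P, v i = ∑ i ∈ A ∩ P, v i + ∑ i ∈ P \ A, v i := by
    rw [Finset.inter_comm, Finset.sum_inter_add_sum_sdiff]
  have h1 : (A \ P).card + (A ∩ P).card = m := Finset.card_sdiff_add_card_inter A P
  have h2 : (P \ A).card + (A ∩ P).card = m := by
    rw [Finset.inter_comm]; rw [← hPcard]; exact Finset.card_sdiff_add_card_inter P A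
  have hcard : (A \ P).card = (P \ A).card := by omega
  have key : ∑ i ∈ A \ P, v i ≤ ∑ i ∈ P \ A, v i := by
    rw [← Finset.sum_coe_sort (A \ P) v, ← Finset.sum_coe_sort (P \ A) v]
    have e := Finset.equivOfCardEq hcard
    rw [← Equiv.sum_comp e (fun x => v x.1)]
    apply Finset.sum_le_sum
    intro y _
    apply hmono
    have hy : ¬ ((y.1 : ℕ) < m) := by
      have := y.2; rw [Finset.mem_sdiff] at this
      simpa [hP, pre] using this.2
    have hey : ((e y).1 : ℕ) < m := by
      have := (e y).2; rw [Finset.mem_sdiff] at this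
      simpa [hP, pre] using this.1
    exact Fin.le_def.mpr (by omega)
  have hsplitP' : ∑ i ∈ pre n m, v i = ∑ i ∈ A ∩ P, v i + ∑ i ∈ P \ A, v i := hsplitP
  rw [hsplitA, hsplitP']
  linarith

end Stmt12Aux

namespace Stmt12Aux

lemma sum_pre_succ (v : Fin n → ℝ) {m : ℕ} (hm : m < n) :
    ∑ i ∈ pre n (m + 1), v i = v ⟨m, hm⟩ + ∑ i ∈ pre n m, v i := by
  have h1 : pre n (m + 1) = insert ⟨m, hm⟩ (pre n m) := by
    ext i; simp [pre, Fin.ext_iff]; omega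
  rw [h1, Finset.sum_insert (by simp [pre])]

lemma avg_pre_mono (v : Fin n → ℝ) (hmono : Antitone v) {k m : ℕ}
    (hk1 : 1 ≤ k) (hkm : k ≤ m) (hmn : m ≤ n) :
    (∑ i ∈ pre n m, v i) / m ≤ (∑ i ∈ pre n k, v i) / k := by
  induction m with
  | zero => omega
  | succ m ih =>
    rcases Nat.eq_or_lt_of_le hkm with h | h
    · rw [h]
    · push_cast
      have hkm' : k ≤ m := by omega
      have hmn' : m < n := by omega
      have step : (∑ i ∈ pre n (m+1), v i) / (m+1) ≤ (∑ i ∈ pre n m, v i) / m := by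
        have hvm : (m : ℝ) * v ⟨m, hmn'⟩ ≤ ∑ i ∈ pre n m, v i := by
          have := Finset.card_nsmul_le_sum (pre n m) v (v ⟨m, hmn'⟩)
            (fun i hi => by
              simp [pre] at hi
              exact hmono (Fin.le_def.mpr (show (i:ℕ) ≤ m by omega)))
          rw [card_pre (le_of_lt hmn'), nsmul_eq_mul] at this
          exact this
        rw [sum_pre_succ v hmn', div_le_div_iff₀ (by positivity) (by
          exact_mod_cast Nat.pos_of_ne_zero (by omega))]
        push_cast
        ring_nf
        nlinarith
      exact step.trans (ih hkm' (le_of_lt hmn'))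

end Stmt12Aux

open Stmt12Aux in
theorem stmt_12 (n : ℕ) (v : Fin n → ℝ) (hmono : Antitone v)
    (hv : ∀ i, 0 ≤ v i) (T : ℝ) (hT : 0 < T) (k : ℕ)
    (hk : T ≤ ∑ i ∈ Finset.univ.filter (fun i : Fin n => (i : ℕ) < k), v i)
    (hkmin : ∀ j < k,
      (∑ i ∈ Finset.univ.filter (fun i : Fin n => (i : ℕ) < j), v i) < T) :
    (∀ A : Finset (Fin n), A.card = k → T ≤ ∑ i ∈ A, v i →
      (∑ i ∈ A, v i) / A.card ≤
        (∑ i ∈ Finset.univ.filter (fun i : Fin n => (i : ℕ) < k), v i) /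
          (Finset.univ.filter (fun i : Fin n => (i : ℕ) < k)).card) ∧
    (∃ B : Finset (Fin n), B.card = k ∧ T ≤ ∑ i ∈ B, v i ∧
      ∀ A : Finset (Fin n), A.Nonempty → T ≤ ∑ i ∈ A, v i →
        (∑ i ∈ A, v i) / A.card ≤ (∑ i ∈ B, v i) / B.card) := by
  have hPe : Finset.univ.filter (fun i : Fin n => (i : ℕ) < k) = pre n k := rfl
  rw [hPe] at hk ⊢
  have hkmin' : ∀ j < k, (∑ i ∈ pre n j, v i) < T := hkmin
  have hk1 : 1 ≤ k := by
    by_contra h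
    have : k = 0 := by omega
    subst this
    simp [pre] at hk
    linarith
  have hkn : k ≤ n := by
    by_contra h
    push_neg at h
    have h2 := hkmin' n h
    have : pre n k = pre n n := by ext i; simp [pre]; omega
    rw [this] at hk
    linarith
  have hPcard : (pre n k).card = k := card_pre hkn
  constructor
  · intro A hA _
    rw [hPcard]
    have hsum : ∑ i ∈ A, v i ≤ ∑ i ∈ pre n k, v i := by
      have := sum_le_pre v hmono A
      rwa [hA] at this
    rw [hA]
    gcongr
  · refine ⟨pre n k, hPcard, hk, ?_⟩
    intro A hAne hAT
    set m := A.card with hm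
    have hm1 : 1 ≤ m := Finset.card_pos.mpr hAne
    have hmn : m ≤ n := by simpa [hm] using Finset.card_le_card (Finset.subset_univ A)
    have hsum : ∑ i ∈ A, v i ≤ ∑ i ∈ pre n m, v i := sum_le_pre v hmono A
    have hkm : k ≤ m := by
      by_contra h
      push_neg at h
      have := hkmin' m h
      linarith
    rw [hPcard]
    calc (∑ i ∈ A, v i) / m ≤ (∑ i ∈ pre n m, v i) / m := by
          gcongr
      _ ≤ (∑ i ∈ pre n k, v i) / k := avg_pre_mono v hmono hk1 hkm hmn
end
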